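/- Let d ≥ 2 and let f(y) = C·exp(−μᵀ log y − (log y)ᵀΘ(log y)) for y in the positive orthant, where Θ is symmetric with Θ𝟙 = 0, Θ positive semidefinite of rank d−1, and μᵀ𝟙 > d. Then for every index k, ∫_{y ∈ 𝓛, y_k > 1} f(y) dy = C·(2π)^{(d−1)/2}·det(2Θ^(k))^{−1/2}·exp(¼(μ−𝟙)_{∖k}ᵀΣ^(k)(μ−𝟙)_{∖k})·(μᵀ𝟙 − d)^{−1}, after the change of variables x = log y which maps {y ∈ 𝓛 : y_k > 1} to {x ∈ ℝ^d : x_k > 0} with Jacobian exp(𝟙ᵀx). -/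

import Mathlib

open Matrix MeasureTheory Real Set

/-! ### Auxiliary lemmas -/

lemma insert_quad {d : ℕ} (Θ : Matrix (Fin (d+1)) (Fin (d+1)) ℝ) (k : Fin (d+1))
    (u : Fin d → ℝ) :
    (k.insertNth 0 u) ⬝ᵥ Θ *ᵥ (k.insertNth 0 u)
      = u ⬝ᵥ (Θ.submatrix k.succAbove k.succAbove) *ᵥ u := by
  set w : Fin (d+1) → ℝ := k.insertNth 0 u with hw
  show w ⬝ᵥ Θ *ᵥ w = _
  unfold dotProduct
  rw [Fin.sum_univ_succAbove (fun i => w i * (Θ *ᵥ w) i) k]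
  have hwk : w k = 0 := by rw [hw]; exact k.insertNth_apply_same (α := fun _ => ℝ) 0 u
  have hws : ∀ j, w (k.succAbove j) = u j := by
    intro j; rw [hw]; exact k.insertNth_apply_succAbove (α := fun _ => ℝ) 0 u j
  rw [hwk, zero_mul, zero_add]
  refine Finset.sum_congr rfl fun j _ => ?_
  rw [hws j]
  congr 1
  show (fun i => Θ (k.succAbove j) i) ⬝ᵥ w = _
  unfold dotProduct
  rw [Fin.sum_univ_succAbove (fun i => Θ (k.succAbove j) i * w i) k]
  rw [hwk, mul_zero, zero_add]
  show _ = (fun j' => Θ.submatrix k.succAbove k.succAbove j j') ⬝ᵥ u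
  unfold dotProduct
  refine Finset.sum_congr rfl fun j' _ => ?_
  rw [hws j']
  rfl

lemma ker_one {d : ℕ} (Θ : Matrix (Fin (d+1)) (Fin (d+1)) ℝ)
    (hone : Θ *ᵥ 1 = 0) (hrank : Θ.rank = d) {w : Fin (d+1) → ℝ}
    (hw : Θ *ᵥ w = 0) : ∃ c : ℝ, w = c • (1 : Fin (d+1) → ℝ) := by
  classical
  have hker : Module.finrank ℝ (LinearMap.ker Θ.mulVecLin) = 1 := by
    have h := LinearMap.finrank_range_add_finrank_ker Θ.mulVecLin
    have hr : Module.finrank ℝ (LinearMap.range Θ.mulVecLin) = d := hrank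
    rw [hr] at h
    simp only [Module.finrank_pi, Fintype.card_fin] at h
    omega
  have hone' : (1 : Fin (d+1) → ℝ) ∈ LinearMap.ker Θ.mulVecLin := by
    simpa [Matrix.mulVecLin_apply] using hone
  have hne : (1 : Fin (d+1) → ℝ) ≠ 0 := by
    intro h
    have := congrFun h 0
    simp at this
  have hle : (ℝ ∙ (1 : Fin (d+1) → ℝ)) ≤ LinearMap.ker Θ.mulVecLin := by
    rwa [Submodule.span_singleton_le_iff_mem]
  have heq : (ℝ ∙ (1 : Fin (d+1) → ℝ)) = LinearMap.ker Θ.mulVecLin := by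
    apply Submodule.eq_of_le_of_finrank_le hle
    rw [hker, finrank_span_singleton hne]
  have hwmem : w ∈ (ℝ ∙ (1 : Fin (d+1) → ℝ)) := by
    rw [heq]
    simpa [Matrix.mulVecLin_apply] using hw
  obtain ⟨c, hc⟩ := Submodule.mem_span_singleton.mp hwmem
  exact ⟨c, hc.symm⟩

lemma submatrix_posDef {d : ℕ} (Θ : Matrix (Fin (d+1)) (Fin (d+1)) ℝ)
    (hone : Θ *ᵥ 1 = 0) (hpsd : Θ.PosSemidef) (hrank : Θ.rank = d) (k : Fin (d+1)) :
    (Θ.submatrix k.succAbove k.succAbove).PosDef := by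
  refine Matrix.PosDef.of_dotProduct_mulVec_pos ?_ ?_
  · have h := hpsd.1
    have : (Θ.submatrix k.succAbove k.succAbove)ᴴ = Θᴴ.submatrix k.succAbove k.succAbove := by
      simp [Matrix.conjTranspose_submatrix]
    rw [Matrix.IsHermitian, this, h]
  · intro u hu
    set w : Fin (d+1) → ℝ := k.insertNth (0:ℝ) u with hwdef
    have hq : star u ⬝ᵥ (Θ.submatrix k.succAbove k.succAbove) *ᵥ u
        = w ⬝ᵥ Θ *ᵥ w := by
      rw [insert_quad Θ k u]; rfl
    have hnonneg : 0 ≤ w ⬝ᵥ Θ *ᵥ w := by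
      have := hpsd.dotProduct_mulVec_nonneg w
      simpa using this
    rw [hq]
    rcases lt_or_eq_of_le hnonneg with h | h
    · exact h
    · exfalso
      have hzero : Θ *ᵥ w = 0 := by
        have := (hpsd.dotProduct_mulVec_zero_iff w).mp
        apply this
        simpa using h.symm
      obtain ⟨c, hc⟩ := ker_one Θ hone hrank hzero
      have hck : c = 0 := by
        have := congrFun hc k
        simpa [hwdef, Fin.insertNth_apply_same] using this.symm
      apply hu
      funext j
      have := congrFun hc (k.succAbove j)
      rw [hck] at this
      simpa [hwdef, Fin.insertNth_apply_succAbove] using this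

open scoped MatrixOrder in
lemma gauss_pure {n : ℕ} (A : Matrix (Fin n) (Fin n) ℝ) (hA : A.PosDef) :
    ∫ v : Fin n → ℝ, Real.exp (-(v ⬝ᵥ A *ᵥ v)) = Real.sqrt Real.pi ^ n / Real.sqrt A.det := by
  classical
  set S := CFC.sqrt A with hSdef
  have hSS : S * S = A := CFC.sqrt_mul_sqrt_self A hA.posSemidef.nonneg
  have hSsym : Sᵀ = S := by
    have := (CFC.sqrt_nonneg A).posSemidef.isHermitian
    rwa [Matrix.IsHermitian, Matrix.conjTranspose_eq_transpose_of_trivial] at this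
  have hdetA : 0 < A.det := hA.det_pos
  have hdetS2 : S.det * S.det = A.det := by rw [← Matrix.det_mul, hSS]
  have hdetS : S.det ≠ 0 := by
    intro h; rw [h, mul_zero] at hdetS2; exact hdetA.ne' hdetS2.symm
  have habs : |S.det| = Real.sqrt A.det := by
    rw [← Real.sqrt_sq_eq_abs, sq, hdetS2]
  have hquad : ∀ v : Fin n → ℝ, v ⬝ᵥ A *ᵥ v = (S *ᵥ v) ⬝ᵥ (S *ᵥ v) := by
    intro v
    rw [← hSS, ← Matrix.mulVec_mulVec, Matrix.dotProduct_mulVec, ← Matrix.mulVec_transpose, hSsym]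
  have hmap : Measure.map (Matrix.toLin' S) volume
      = ENNReal.ofReal |S.det⁻¹| • volume :=
    Real.map_matrix_volume_pi_eq_smul_volume_pi hdetS
  have hcont : Continuous fun w : Fin n → ℝ => Real.exp (-(w ⬝ᵥ w)) := by
    continuity
  have h1 : ∫ v : Fin n → ℝ, Real.exp (-(v ⬝ᵥ A *ᵥ v))
      = ∫ v : Fin n → ℝ, Real.exp (-((Matrix.toLin' S v) ⬝ᵥ (Matrix.toLin' S v))) := by
    simp_rw [Matrix.toLin'_apply, hquad]
  rw [h1, ← integral_map (Matrix.toLin' S).continuous_of_finiteDimensional.measurable.aemeasurable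
      hcont.aestronglyMeasurable, hmap, integral_smul_measure]
  have hprod : ∫ w : Fin n → ℝ, Real.exp (-(w ⬝ᵥ w)) = Real.sqrt Real.pi ^ n := by
    have : ∀ w : Fin n → ℝ, Real.exp (-(w ⬝ᵥ w)) = ∏ i, Real.exp (-(w i ^ 2)) := by
      intro w
      rw [← Real.exp_sum]
      congr 1
      simp [dotProduct, Finset.sum_neg_distrib, sq]
    simp_rw [this]
    rw [MeasureTheory.integral_fintype_prod_volume_eq_prod (f := fun (_ : Fin n) (x : ℝ) => Real.exp (-(x^2)))]
    have : ∫ x : ℝ, Real.exp (-(x^2)) = Real.sqrt Real.pi := by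
      simpa using integral_gaussian 1
    rw [this]
    simp
  rw [hprod, abs_inv, habs, ENNReal.toReal_ofReal (by positivity), smul_eq_mul, inv_mul_eq_div]

lemma gauss_lin {n : ℕ} (A : Matrix (Fin n) (Fin n) ℝ) (hA : A.PosDef) (b : Fin n → ℝ) :
    ∫ v : Fin n → ℝ, Real.exp (-(b ⬝ᵥ v) - v ⬝ᵥ A *ᵥ v)
      = Real.sqrt Real.pi ^ n / Real.sqrt A.det * Real.exp ((1/4) * (b ⬝ᵥ A⁻¹ *ᵥ b)) := by
  classical
  have hAsym : Aᵀ = A := by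
    have := hA.isHermitian
    rwa [Matrix.IsHermitian, Matrix.conjTranspose_eq_transpose_of_trivial] at this
  have hU : IsUnit A.det := hA.det_pos.ne'.isUnit
  have hAinv : A * A⁻¹ = 1 := Matrix.mul_nonsing_inv A hU
  set m : Fin n → ℝ := (-(1/2 : ℝ)) • (A⁻¹ *ᵥ b) with hm
  have hAm : A *ᵥ m = (-(1/2 : ℝ)) • b := by
    rw [hm, Matrix.mulVec_smul, Matrix.mulVec_mulVec, hAinv, Matrix.one_mulVec]
  have key : ∀ v : Fin n → ℝ, -(b ⬝ᵥ (v + m)) - (v + m) ⬝ᵥ A *ᵥ (v + m)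
      = (1/4) * (b ⬝ᵥ A⁻¹ *ᵥ b) + -(v ⬝ᵥ A *ᵥ v) := by
    intro v
    have hmv : m ⬝ᵥ A *ᵥ v = -(1/2 : ℝ) * (b ⬝ᵥ v) := by
      rw [Matrix.dotProduct_mulVec, ← Matrix.mulVec_transpose, hAsym, hAm,
        smul_dotProduct, smul_eq_mul]
    have hvm : v ⬝ᵥ A *ᵥ m = -(1/2 : ℝ) * (b ⬝ᵥ v) := by
      rw [hAm, dotProduct_smul, smul_eq_mul, dotProduct_comm]
    have hmm : m ⬝ᵥ A *ᵥ m = (1/4 : ℝ) * (b ⬝ᵥ A⁻¹ *ᵥ b) := by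
      rw [hAm, dotProduct_smul, hm, smul_dotProduct, smul_eq_mul, smul_eq_mul,
        dotProduct_comm]
      ring
    have hbm : b ⬝ᵥ m = -(1/2 : ℝ) * (b ⬝ᵥ A⁻¹ *ᵥ b) := by
      rw [hm, dotProduct_smul, smul_eq_mul]
    rw [Matrix.mulVec_add, dotProduct_add, add_dotProduct,
      dotProduct_add, dotProduct_add, hmv, hvm, hmm, hbm]
    ring
  calc ∫ v : Fin n → ℝ, Real.exp (-(b ⬝ᵥ v) - v ⬝ᵥ A *ᵥ v)
      = ∫ v : Fin n → ℝ, Real.exp (-(b ⬝ᵥ (v + m)) - (v + m) ⬝ᵥ A *ᵥ (v + m)) :=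
        (integral_add_right_eq_self (fun v : Fin n → ℝ => Real.exp (-(b ⬝ᵥ v) - v ⬝ᵥ A *ᵥ v)) m).symm
    _ = ∫ v : Fin n → ℝ, Real.exp ((1/4) * (b ⬝ᵥ A⁻¹ *ᵥ b)) * Real.exp (-(v ⬝ᵥ A *ᵥ v)) := by
        congr 1; ext v; rw [key v, Real.exp_add]
    _ = Real.exp ((1/4) * (b ⬝ᵥ A⁻¹ *ᵥ b)) * ∫ v : Fin n → ℝ, Real.exp (-(v ⬝ᵥ A *ᵥ v)) :=
        integral_const_mul _ _
    _ = Real.sqrt Real.pi ^ n / Real.sqrt A.det * Real.exp ((1/4) * (b ⬝ᵥ A⁻¹ *ᵥ b)) := by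
        rw [gauss_pure A hA]; ring

lemma step_A {n : ℕ} (k : Fin n) (g : (Fin n → ℝ) → ℝ) :
    ∫ y in {y : Fin n → ℝ | (∀ i, 0 < y i) ∧ 1 < y k}, g y
      = ∫ x in {x : Fin n → ℝ | 0 < x k}, Real.exp (∑ i, x i) * g (fun i => Real.exp (x i)) := by
  classical
  set s : Set (Fin n → ℝ) := {x | 0 < x k} with hs
  set f : (Fin n → ℝ) → (Fin n → ℝ) := fun x i => Real.exp (x i) with hf
  set f' : (Fin n → ℝ) → ((Fin n → ℝ) →L[ℝ] (Fin n → ℝ)) :=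
    fun x => ContinuousLinearMap.pi (fun i => Real.exp (x i) • ContinuousLinearMap.proj i) with hf'
  have hmeas : MeasurableSet s :=
    measurableSet_lt measurable_const ((measurable_pi_apply k))
  have hderiv : ∀ x ∈ s, HasFDerivWithinAt f (f' x) s x := by
    intro x _
    apply HasFDerivAt.hasFDerivWithinAt
    apply hasFDerivAt_pi''
    intro i
    rw [ContinuousLinearMap.proj_pi]
    exact (Real.hasDerivAt_exp (x i)).comp_hasFDerivAt x (hasFDerivAt_apply (𝕜 := ℝ) i x)
  have hinj : Set.InjOn f s := by
    intro a _ b _ hab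
    funext i
    have := congrFun hab i
    exact Real.exp_injective this
  have himg : f '' s = {y : Fin n → ℝ | (∀ i, 0 < y i) ∧ 1 < y k} := by
    ext y
    constructor
    · rintro ⟨x, hx, rfl⟩
      exact ⟨fun i => Real.exp_pos _, Real.one_lt_exp_iff.mpr hx⟩
    · rintro ⟨hpos, hk⟩
      refine ⟨fun i => Real.log (y i), ?_, ?_⟩
      · exact Real.log_pos hk
      · funext i; exact Real.exp_log (hpos i)
  have hdet : ∀ x : Fin n → ℝ, (f' x).det = Real.exp (∑ i, x i) := by
    intro x
    have h1 : ((f' x) : (Fin n → ℝ) →ₗ[ℝ] (Fin n → ℝ))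
        = Matrix.toLin' (Matrix.diagonal fun i => Real.exp (x i)) := by
      apply LinearMap.ext
      intro w
      funext i
      simp [hf', Matrix.toLin'_apply, Matrix.mulVec_diagonal]
    rw [ContinuousLinearMap.det, h1, LinearMap.det_toLin', Matrix.det_diagonal, ← Real.exp_sum]
  rw [← himg, integral_image_eq_integral_abs_det_fderiv_smul volume hmeas hderiv hinj g]
  refine setIntegral_congr_fun hmeas fun x _ => ?_
  rw [hdet x, abs_of_pos (Real.exp_pos _), smul_eq_mul]

def shearEquiv (d : ℕ) : (ℝ × (Fin d → ℝ)) ≃ᵐ (ℝ × (Fin d → ℝ)) where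
  toFun := fun p => (p.1, fun j => p.2 j + p.1)
  invFun := fun p => (p.1, fun j => p.2 j - p.1)
  left_inv := fun p => by simp
  right_inv := fun p => by simp
  measurable_toFun := by
    apply Measurable.prod
    · exact measurable_fst
    · exact measurable_pi_lambda _ fun j =>
        ((measurable_pi_apply j).comp measurable_snd).add measurable_fst
  measurable_invFun := by
    apply Measurable.prod
    · exact measurable_fst
    · exact measurable_pi_lambda _ fun j =>
        ((measurable_pi_apply j).comp measurable_snd).sub measurable_fst

lemma shear_mp (d : ℕ) : MeasurePreserving (shearEquiv d) volume volume := by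
  have h : MeasurePreserving
      (fun p : ℝ × (Fin d → ℝ) => (p.1, fun j => p.2 j + p.1))
      (volume.prod volume) (volume.prod volume) := by
    exact MeasurePreserving.skew_product (f := @id ℝ)
      (g := fun (a : ℝ) (c : Fin d → ℝ) => fun j => c j + a)
      (MeasurePreserving.id volume)
      (measurable_pi_lambda _ fun j =>
        ((measurable_pi_apply j).comp measurable_snd).add measurable_fst)
      (Filter.Eventually.of_forall fun t =>
        show Measure.map (fun u : Fin d → ℝ => u + fun _ => t) volume = volume from
          map_add_right_eq_self volume _)
  rw [show (volume : Measure (ℝ × (Fin d → ℝ))) = volume.prod volume from Measure.volume_eq_prod .. ]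
  exact h

lemma step_BC {d : ℕ} (k : Fin (d+1)) (F : ℝ → ℝ) (G : (Fin d → ℝ) → ℝ)
    (H : (Fin (d+1) → ℝ) → ℝ)
    (hH : ∀ t (u : Fin d → ℝ), H (k.insertNth t (fun j => u j + t)) = F t * G u) :
    ∫ x in {x : Fin (d+1) → ℝ | 0 < x k}, H x
      = (∫ t in Ioi (0:ℝ), F t) * ∫ u : Fin d → ℝ, G u := by
  classical
  set e := (MeasurableEquiv.piFinSuccAbove (fun _ : Fin (d+1) => ℝ) k).symm with he
  set Ψ := (shearEquiv d).trans e with hΨ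
  have hmp : MeasurePreserving Ψ volume volume :=
    ((volume_preserving_piFinSuccAbove (fun _ : Fin (d+1) => ℝ) k).symm _).comp (shear_mp d)
  have hΨapp : ∀ p : ℝ × (Fin d → ℝ), Ψ p = k.insertNth p.1 (fun j => p.2 j + p.1) := by
    intro p
    rfl
  have hpre : Ψ ⁻¹' {x : Fin (d+1) → ℝ | 0 < x k} = Ioi (0:ℝ) ×ˢ (univ : Set (Fin d → ℝ)) := by
    ext p
    simp only [Set.mem_preimage, Set.mem_setOf_eq, hΨapp p, Set.mem_prod, Set.mem_univ, and_true,
      Set.mem_Ioi]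
    rw [Fin.insertNth_apply_same]
  rw [← hmp.setIntegral_preimage_emb Ψ.measurableEmbedding H, hpre]
  have : ∀ p : ℝ × (Fin d → ℝ), H (Ψ p) = F p.1 * G p.2 := by
    intro p; rw [hΨapp p, hH]
  simp_rw [this]
  rw [show (volume : Measure (ℝ × (Fin d → ℝ))) = volume.prod volume from Measure.volume_eq_prod ..,
    ← Measure.prod_restrict, Measure.restrict_univ]
  exact integral_prod_mul F G

lemma exp_Ioi {s : ℝ} (hs : 0 < s) : ∫ t in Ioi (0:ℝ), Real.exp (-(s*t)) = s⁻¹ := by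
  have h := integral_comp_mul_left_Ioi (fun x => Real.exp (-x)) 0 hs
  simp only [mul_zero, integral_exp_neg_Ioi, smul_eq_mul] at h
  rw [h, neg_zero, Real.exp_zero, mul_one]

theorem stmt16 (d : ℕ) (hd : 1 ≤ d) (C : ℝ) (hC : 0 < C) (μ : Fin (d+1) → ℝ)
    (Θ : Matrix (Fin (d+1)) (Fin (d+1)) ℝ) (hsymm : Θ.IsSymm) (hone : Θ *ᵥ 1 = 0)
    (hpsd : Θ.PosSemidef) (hrank : Θ.rank = d) (hμ : (d + 1 : ℝ) < μ ⬝ᵥ 1)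
    (k : Fin (d+1)) :
    (∫ y in {y : Fin (d+1) → ℝ | (∀ i, 0 < y i) ∧ 1 < y k},
        C * Real.exp (-(μ ⬝ᵥ fun i => Real.log (y i))
          - (fun i => Real.log (y i)) ⬝ᵥ (Θ *ᵥ fun i => Real.log (y i))))
      = C * (2 * Real.pi) ^ ((d : ℝ) / 2)
          / Real.sqrt ((2 • Θ.submatrix k.succAbove k.succAbove).det)
          * Real.exp ((1/4) * (((μ - 1) ∘ k.succAbove) ⬝ᵥ
              ((Θ.submatrix k.succAbove k.succAbove)⁻¹ *ᵥ ((μ - 1) ∘ k.succAbove))))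
          * (μ ⬝ᵥ 1 - (d + 1))⁻¹ := by
  classical
  set A := Θ.submatrix k.succAbove k.succAbove with hAdef
  have hApd : A.PosDef := submatrix_posDef Θ hone hpsd hrank k
  set b : Fin d → ℝ := (μ - 1) ∘ k.succAbove with hbdef
  set s : ℝ := μ ⬝ᵥ 1 - ((d:ℝ) + 1) with hsdef
  have hs : 0 < s := by rw [hsdef]; linarith
  have hΘsym : Θᵀ = Θ := hsymm
  -- Step A : change of variables y = exp x
  rw [step_A k (fun y => C * Real.exp (-(μ ⬝ᵥ fun i => Real.log (y i))
      - (fun i => Real.log (y i)) ⬝ᵥ (Θ *ᵥ fun i => Real.log (y i))))]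
  simp only [Real.log_exp]
  -- Step B/C : shear and split
  have hsplit : ∫ x in {x : Fin (d+1) → ℝ | 0 < x k},
      Real.exp (∑ i, x i) * (C * Real.exp (-(μ ⬝ᵥ fun i => x i)
        - (fun i => x i) ⬝ᵥ (Θ *ᵥ fun i => x i)))
      = (∫ t in Ioi (0:ℝ), Real.exp (-(s*t)))
        * ∫ u : Fin d → ℝ, C * Real.exp (-(b ⬝ᵥ u) - u ⬝ᵥ A *ᵥ u) := by
    apply step_BC
    intro t u
    set x : Fin (d+1) → ℝ := k.insertNth t (fun j => u j + t) with hx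
    set w : Fin (d+1) → ℝ := k.insertNth 0 u with hwdef
    have hxw : x = w + t • (1 : Fin (d+1) → ℝ) := by
      funext i
      refine Fin.succAboveCases k ?_ ?_ i
      · rw [hx, hwdef]
        simp [Fin.insertNth_apply_same]
      · intro j
        rw [hx, hwdef]
        simp [Fin.insertNth_apply_succAbove]
    have hwk : w k = 0 := by
      rw [hwdef]; exact k.insertNth_apply_same (α := fun _ => ℝ) 0 u
    have hws : ∀ j, w (k.succAbove j) = u j := by
      intro j; rw [hwdef]; exact k.insertNth_apply_succAbove (α := fun _ => ℝ) 0 u j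
    have hsumw : ∑ i, w i = ∑ j, u j := by
      rw [Fin.sum_univ_succAbove (fun i => w i) k, hwk, zero_add]
      exact Finset.sum_congr rfl fun j _ => hws j
    have hsumx : ∑ i, x i = ∑ j, u j + ((d:ℝ)+1) * t := by
      rw [hxw]
      simp only [Pi.add_apply, Pi.smul_apply, Pi.one_apply, smul_eq_mul, mul_one]
      rw [Finset.sum_add_distrib, hsumw, Finset.sum_const, Finset.card_univ, Fintype.card_fin,
        nsmul_eq_mul]
      push_cast
      ring
    have hμx : μ ⬝ᵥ x = (fun j => μ (k.succAbove j)) ⬝ᵥ u + t * (μ ⬝ᵥ 1) := by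
      rw [hxw, dotProduct_add, dotProduct_smul, smul_eq_mul]
      congr 1
      show ∑ i, μ i * w i = _
      rw [Fin.sum_univ_succAbove (fun i => μ i * w i) k, hwk, mul_zero, zero_add]
      exact Finset.sum_congr rfl fun j _ => by rw [hws j]
    have hquad : x ⬝ᵥ Θ *ᵥ x = u ⬝ᵥ A *ᵥ u := by
      have hΘx : Θ *ᵥ x = Θ *ᵥ w := by
        rw [hxw, Matrix.mulVec_add, Matrix.mulVec_smul, hone, smul_zero, add_zero]
      rw [hΘx, hxw, add_dotProduct]
      have hone' : (t • (1 : Fin (d+1) → ℝ)) ⬝ᵥ (Θ *ᵥ w) = 0 := by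
        rw [smul_dotProduct, Matrix.dotProduct_mulVec, ← Matrix.mulVec_transpose,
          hΘsym, hone]
        simp
      rw [hone', add_zero, hwdef]
      exact insert_quad Θ k u
    have hbu : b ⬝ᵥ u = (fun j => μ (k.succAbove j)) ⬝ᵥ u - ∑ j, u j := by
      rw [hbdef]
      show ∑ j, (μ - 1) (k.succAbove j) * u j
          = ∑ j, μ (k.succAbove j) * u j - ∑ j, u j
      rw [← Finset.sum_sub_distrib]
      refine Finset.sum_congr rfl fun j _ => ?_
      simp only [Pi.sub_apply, Pi.one_apply]
      ring
    have hexp : ∑ i, x i + (-(μ ⬝ᵥ x) - x ⬝ᵥ Θ *ᵥ x)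
        = -(s*t) + (-(b ⬝ᵥ u) - u ⬝ᵥ A *ᵥ u) := by
      rw [hsumx, hμx, hquad, hbu, hsdef]
      ring
    show Real.exp (∑ i, x i) * (C * Real.exp (-(μ ⬝ᵥ x) - x ⬝ᵥ Θ *ᵥ x)) = _
    rw [mul_left_comm, ← Real.exp_add, hexp, Real.exp_add, mul_left_comm]
  rw [hsplit, exp_Ioi hs, integral_const_mul, gauss_lin A hApd b]
  -- final arithmetic
  have hdet2 : ((2:ℕ) • A).det = 2^d * A.det := by
    rw [← Nat.cast_smul_eq_nsmul ℝ 2 A, Matrix.det_smul]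
    norm_num
  have hdetA : 0 < A.det := hApd.det_pos
  have hsq2 : Real.sqrt ((2:ℝ)^d) = Real.sqrt 2 ^ d := by
    rw [show ((2:ℝ)^d) = ((Real.sqrt 2)^d)^2 by
        rw [← pow_mul, mul_comm d 2, pow_mul, Real.sq_sqrt (by norm_num : (0:ℝ) ≤ 2)],
      Real.sqrt_sq (by positivity)]
  have h2pi : (2 * Real.pi) ^ ((d : ℝ) / 2) = Real.sqrt 2 ^ d * Real.sqrt Real.pi ^ d := by
    have h2 : (0:ℝ) ≤ 2 * Real.pi := by positivity
    have h1 : (2 * Real.pi) ^ ((d : ℝ) / 2) = ((2 * Real.pi) ^ ((1:ℝ)/2)) ^ (d:ℕ) := by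
      rw [← Real.rpow_natCast ((2*Real.pi)^((1:ℝ)/2)) d, ← Real.rpow_mul h2]
      norm_num
      ring_nf
    rw [h1, ← Real.sqrt_eq_rpow, Real.sqrt_mul (by norm_num), mul_pow]
  have hsqrt2A : Real.sqrt ((2 • A).det) = Real.sqrt 2 ^ d * Real.sqrt A.det := by
    rw [hdet2, Real.sqrt_mul (by positivity), hsq2]
  rw [h2pi, hsqrt2A]
  have hne1 : Real.sqrt 2 ^ d ≠ 0 := by positivity
  have hne2 : Real.sqrt A.det ≠ 0 := (Real.sqrt_pos.mpr hdetA).ne'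
  field_simp
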